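/- Let s > 0, and let k ∈ ℕ be the integer with s ∈ [k−1, k). Let α > −1, β ∈ ℝ, and n ∈ ℕ. Then for every x ∈ (−1, 1), D_+^s[ (1−·)^{α+s} P_n^{(α+s, β−s)} ](x) = [Γ(n+α+s+1)/Γ(n+α+1)] · (1−x)^{α} · P_n^{(α,β)}(x). -/

import Mathlib

open MeasureTheory Filter Finset

/-- Jacobi polynomial with real parameters. -/
noncomputable def jacobiP (a b : ℝ) (n : ℕ) (x : ℝ) : ℝ :=
  ∑ j ∈ Finset.range (n + 1),
    ((ascPochhammer ℝ j).eval ((n : ℝ) + a + b + 1) / (Nat.factorial j : ℝ)) *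
      ((ascPochhammer ℝ (n - j)).eval (a + (j : ℝ) + 1) / (Nat.factorial (n - j) : ℝ)) *
      ((x - 1) / 2) ^ j

/-- Right Riemann-Liouville fractional integral on (-1,1). -/
noncomputable def Iplus (ρ : ℝ) (v : ℝ → ℝ) (x : ℝ) : ℝ :=
  (1 / Real.Gamma ρ) * ∫ y in x..1, (y - x) ^ (ρ - 1) * v y

/-- Left Riemann-Liouville fractional integral on (-1,1). -/
noncomputable def Iminus (ρ : ℝ) (v : ℝ → ℝ) (x : ℝ) : ℝ :=
  (1 / Real.Gamma ρ) * ∫ y in (-1 : ℝ)..x, (x - y) ^ (ρ - 1) * v y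

/-- Right Riemann-Liouville fractional derivative of order `s ∈ [k-1,k)`. -/
noncomputable def Dplus (s : ℝ) (k : ℕ) (v : ℝ → ℝ) (x : ℝ) : ℝ :=
  (-1 : ℝ) ^ k * iteratedDeriv k (Iplus ((k : ℝ) - s) v) x

/-- Left Riemann-Liouville fractional derivative of order `s ∈ [k-1,k)`. -/
noncomputable def Dminus (s : ℝ) (k : ℕ) (v : ℝ → ℝ) (x : ℝ) : ℝ :=
  iteratedDeriv k (Iminus ((k : ℝ) - s) v) x


/-! Multiplying out, `(1 - y) ^ a * P_n^{(a,b)}(y)` is a finite combination of the powers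
`(1 - y) ^ (a + j)`. On such a power the right Riemann–Liouville integral acts, by a Beta integral,
as `I_+^ρ (1 - ·) ^ μ = Γ(μ + 1) / Γ(ρ + μ + 1) · (1 - ·) ^ (ρ + μ)`, and `k` ordinary derivatives
then give `D_+^s (1 - ·) ^ μ = Γ(μ + 1) / Γ(μ - s + 1) · (1 - ·) ^ (μ - s)` for every `k > s`.
Applied to `a = α + s`, `b = β - s`, the Gamma quotient `Γ(α + s + j + 1) / Γ(α + j + 1)` turns the
Pochhammer factor `(α + s + j + 1)_{n-j}` into `(α + j + 1)_{n-j}` times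
`Γ(n + α + s + 1) / Γ(n + α + 1)`, which is the claim term by term. -/

open Real Topology

theorem integral_rpow_mul_sub_rpow {a p q : ℝ} (ha : 0 < a) (hp : 0 < p) (hq : 0 < q) :
    ∫ t in (0 : ℝ)..a, t ^ (p - 1) * (a - t) ^ (q - 1) =
      a ^ (p + q - 1) * (Gamma p * Gamma q / Gamma (p + q)) := by
  have hcast : ((∫ t in (0 : ℝ)..a, t ^ (p - 1) * (a - t) ^ (q - 1) : ℝ) : ℂ) =
      ∫ t in (0 : ℝ)..a, (t : ℂ) ^ ((p : ℂ) - 1) * ((a : ℂ) - t) ^ ((q : ℂ) - 1) := by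
    rw [← intervalIntegral.integral_ofReal]
    refine intervalIntegral.integral_congr fun t ht => ?_
    rw [Set.uIcc_of_le ha.le] at ht
    simp only [Complex.ofReal_mul]
    rw [Complex.ofReal_cpow ht.1, Complex.ofReal_cpow (sub_nonneg.2 ht.2)]
    push_cast
    rfl
  have key := Complex.betaIntegral_scaled p q ha
  rw [Complex.betaIntegral_eq_Gamma_mul_div _ _ (by simpa) (by simpa), ← hcast,
    ← Complex.ofReal_add, Complex.Gamma_ofReal, Complex.Gamma_ofReal, Complex.Gamma_ofReal]
    at key
  rw [show ((p + q : ℝ) : ℂ) - 1 = ((p + q - 1 : ℝ) : ℂ) by push_cast; ring,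
    ← Complex.ofReal_cpow ha.le] at key
  exact_mod_cast key

section FractionalIntegral

variable {ρ μ x : ℝ}

theorem integral_sub_rpow_mul_one_sub_rpow (hρ : 0 < ρ) (hμ : -1 < μ) (hx : x < 1) :
    ∫ y in x..1, (y - x) ^ (ρ - 1) * (1 - y) ^ μ =
      (1 - x) ^ (ρ + μ) * (Gamma ρ * Gamma (μ + 1) / Gamma (ρ + μ + 1)) := by
  have hbeta := integral_rpow_mul_sub_rpow (sub_pos.2 hx) hρ (show 0 < μ + 1 by linarith)
  have hshift := intervalIntegral.integral_comp_sub_right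
    (fun t => t ^ (ρ - 1) * ((1 - x) - t) ^ μ) (a := x) (b := 1) x
  simp only [sub_self, sub_sub_sub_cancel_right] at hshift
  rw [add_sub_cancel_right, ← hshift] at hbeta
  rw [hbeta, show ρ + (μ + 1) - 1 = ρ + μ by ring, ← add_assoc]

theorem intervalIntegrable_sub_rpow_mul_one_sub_rpow (hρ : 0 < ρ) (hμ : -1 < μ) (hx : x < 1) :
    IntervalIntegrable (fun y => (y - x) ^ (ρ - 1) * (1 - y) ^ μ) volume x 1 := by
  -- a non-integrable function has integral `0`, and this integral is a positive Beta value
  refine intervalIntegral.intervalIntegrable_of_integral_ne_zero ?_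
  rw [integral_sub_rpow_mul_one_sub_rpow hρ hμ hx]
  have := Gamma_pos_of_pos hρ
  have := Gamma_pos_of_pos (show 0 < μ + 1 by linarith)
  have := Gamma_pos_of_pos (show 0 < ρ + μ + 1 by linarith)
  have := rpow_pos_of_pos (sub_pos.2 hx) (ρ + μ)
  positivity

theorem Iplus_congr {v w : ℝ → ℝ} (h : Set.EqOn v w (Set.Ioo x 1)) (hx : x ≤ 1) :
    Iplus ρ v x = Iplus ρ w x := by
  simp only [Iplus, intervalIntegral.integral_of_le hx, integral_Ioc_eq_integral_Ioo]
  congr 1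
  exact setIntegral_congr_fun measurableSet_Ioo fun y hy => by rw [h hy]

theorem Iplus_sum_one_sub_rpow {ι : Type*} (t : Finset ι) (c e : ι → ℝ) (hρ : 0 < ρ)
    (he : ∀ i ∈ t, -1 < e i) (hx : x < 1) :
    Iplus ρ (fun y => ∑ i ∈ t, c i * (1 - y) ^ e i) x =
      ∑ i ∈ t, c i * (Gamma (e i + 1) / Gamma (ρ + e i + 1)) * (1 - x) ^ (ρ + e i) := by
  have hint : ∀ i ∈ t, IntervalIntegrable
      (fun y => c i * ((y - x) ^ (ρ - 1) * (1 - y) ^ e i)) volume x 1 :=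
    fun i hi => (intervalIntegrable_sub_rpow_mul_one_sub_rpow hρ (he i hi) hx).const_mul _
  simp only [Iplus, Finset.mul_sum, mul_left_comm _ (c _)]
  rw [intervalIntegral.integral_finsetSum hint, Finset.mul_sum]
  refine Finset.sum_congr rfl fun i hi => ?_
  rw [intervalIntegral.integral_const_mul, integral_sub_rpow_mul_one_sub_rpow hρ (he i hi) hx]
  field_simp [(Gamma_pos_of_pos hρ).ne']

end FractionalIntegral

theorem ascPochhammer_eval_eq_Gamma_div (m : ℕ) {x : ℝ} (hx : 0 < x) :
    (ascPochhammer ℝ m).eval x = Gamma (x + m) / Gamma x := by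
  induction m with
  | zero => simp [(Gamma_pos_of_pos hx).ne']
  | succ m ih =>
    rw [ascPochhammer_succ_eval, ih, Nat.cast_succ, ← add_assoc,
      Gamma_add_one (by positivity : x + m ≠ 0)]
    ring

theorem descPochhammer_eval_eq_Gamma_div (m : ℕ) {r : ℝ} (hr : 0 < r - m + 1) :
    (descPochhammer ℝ m).eval r = Gamma (r + 1) / Gamma (r - m + 1) := by
  rw [descPochhammer_eval_eq_ascPochhammer, ascPochhammer_eval_eq_Gamma_div m hr]
  ring_nf

theorem iteratedDeriv_one_sub_rpow (m : ℕ) (e x : ℝ) :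
    iteratedDeriv m (fun y => (1 - y) ^ e) x =
      (-1) ^ m * (descPochhammer ℝ m).eval e * (1 - x) ^ (e - m) := by
  rw [iteratedDeriv_comp_const_sub m (fun z : ℝ => z ^ e), iteratedDeriv_eq_iterate]
  simp only [iter_deriv_rpow_const, smul_eq_mul, mul_assoc]

theorem iteratedDeriv_sum_one_sub_rpow {ι : Type*} (t : Finset ι) (c e : ι → ℝ) (m : ℕ)
    {x : ℝ} (hx : x < 1) :
    iteratedDeriv m (fun y => ∑ i ∈ t, c i * (1 - y) ^ e i) x =
      ∑ i ∈ t, c i * ((-1) ^ m * (descPochhammer ℝ m).eval (e i)) * (1 - x) ^ (e i - m) := by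
  have hsmooth : ∀ i ∈ t, ContDiffAt ℝ m (fun y => c i * (1 - y) ^ e i) x := fun i _ =>
    contDiffAt_const.mul ((contDiffAt_rpow_const_of_ne (sub_pos.2 hx).ne').comp x
      (contDiffAt_const.sub contDiffAt_id))
  rw [iteratedDeriv_fun_sum hsmooth]
  refine Finset.sum_congr rfl fun i _ => ?_
  rw [iteratedDeriv_const_mul_field, iteratedDeriv_one_sub_rpow]
  ring

section FractionalDerivative

variable {s : ℝ} {k : ℕ} {x : ℝ}

theorem Dplus_congr {v w : ℝ → ℝ} (h : Set.EqOn v w (Set.Iio 1)) (hx : x < 1) :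
    Dplus s k v x = Dplus s k w x := by
  rw [Dplus, Dplus, Filter.EventuallyEq.iteratedDeriv_eq]
  filter_upwards [Iio_mem_nhds hx] with y hy
  exact Iplus_congr (h.mono fun _ hz => hz.2) hy.le

theorem Dplus_sum_one_sub_rpow {ι : Type*} (t : Finset ι) (c e : ι → ℝ) (hk : s < k)
    (he : ∀ i ∈ t, -1 < e i) (hes : ∀ i ∈ t, -1 < e i - s) (hx : x < 1) :
    Dplus s k (fun y => ∑ i ∈ t, c i * (1 - y) ^ e i) x =
      ∑ i ∈ t, c i * (Gamma (e i + 1) / Gamma (e i - s + 1)) * (1 - x) ^ (e i - s) := by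
  have hρ : 0 < (k : ℝ) - s := sub_pos.2 hk
  have hI : Iplus ((k : ℝ) - s) (fun y => ∑ i ∈ t, c i * (1 - y) ^ e i) =ᶠ[𝓝 x]
      fun y => ∑ i ∈ t, c i * (Gamma (e i + 1) / Gamma (k - s + e i + 1)) *
        (1 - y) ^ (k - s + e i) := by
    filter_upwards [Iio_mem_nhds hx] with y hy
    exact Iplus_sum_one_sub_rpow t c e hρ he hy
  rw [Dplus, hI.iteratedDeriv_eq, iteratedDeriv_sum_one_sub_rpow _ _ _ _ hx, Finset.mul_sum]
  refine Finset.sum_congr rfl fun i hi => ?_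
  have hpos : 0 < (k : ℝ) - s + e i - k + 1 := by linarith [hes i hi]
  rw [descPochhammer_eval_eq_Gamma_div k hpos]
  have hΓ : Gamma ((k : ℝ) - s + e i + 1) ≠ 0 := (Gamma_pos_of_pos (by linarith [he i hi])).ne'
  have hΓ' : Gamma (e i - s + 1) ≠ 0 := (Gamma_pos_of_pos (by linarith [hes i hi])).ne'
  have hsign : ((-1 : ℝ) ^ k) ^ 2 = 1 := by simp [← pow_mul]
  rw [show (k : ℝ) - s + e i - k + 1 = e i - s + 1 by ring,
    show (k : ℝ) - s + e i - k = e i - s by ring]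
  field_simp
  linear_combination (c i * Gamma (e i + 1) * (1 - x) ^ (e i - s)) * hsign

end FractionalDerivative

open Nat in
noncomputable def jacobiCoeff (a b : ℝ) (n j : ℕ) : ℝ :=
  (ascPochhammer ℝ j).eval (n + a + b + 1) / j ! *
    ((ascPochhammer ℝ (n - j)).eval (a + j + 1) / (n - j)!) * (-1 / 2) ^ j

theorem one_sub_rpow_mul_jacobiP (a b : ℝ) (n : ℕ) {y : ℝ} (hy : y < 1) :
    (1 - y) ^ a * jacobiP a b n y =
      ∑ j ∈ Finset.range (n + 1), jacobiCoeff a b n j * (1 - y) ^ (a + j) := by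
  rw [jacobiP, Finset.mul_sum]
  refine Finset.sum_congr rfl fun j _ => ?_
  rw [jacobiCoeff, rpow_add (sub_pos.2 hy), rpow_natCast,
    show (y - 1) / 2 = -1 / 2 * (1 - y) by ring, mul_pow]
  ring

theorem ascPochhammer_eval_sub_eq_Gamma_div {a : ℝ} (ha : -1 < a) {n j : ℕ} (hj : j ≤ n) :
    (ascPochhammer ℝ (n - j)).eval (a + j + 1) = Gamma (n + a + 1) / Gamma (a + j + 1) := by
  rw [ascPochhammer_eval_eq_Gamma_div _ (by linarith [j.cast_nonneg (α := ℝ)]), Nat.cast_sub hj]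
  ring_nf

theorem jacobiCoeff_mul_Gamma_div {α s : ℝ} (β : ℝ) (n : ℕ) {j : ℕ} (hα : -1 < α)
    (hαs : -1 < α + s) (hj : j ≤ n) :
    jacobiCoeff (α + s) (β - s) n j * (Gamma (α + s + j + 1) / Gamma (α + j + 1)) =
      Gamma (n + α + s + 1) / Gamma (n + α + 1) * jacobiCoeff α β n j := by
  simp only [jacobiCoeff, ascPochhammer_eval_sub_eq_Gamma_div hα hj,
    ascPochhammer_eval_sub_eq_Gamma_div hαs hj]
  rw [show (n : ℝ) + (α + s) + (β - s) + 1 = n + α + β + 1 by ring,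
    show (n : ℝ) + (α + s) + 1 = n + α + s + 1 by ring]
  have hj0 := j.cast_nonneg (α := ℝ)
  have h1 : Gamma (α + j + 1) ≠ 0 := (Gamma_pos_of_pos (by linarith)).ne'
  have h2 : Gamma (α + s + j + 1) ≠ 0 := (Gamma_pos_of_pos (by linarith)).ne'
  have h3 : Gamma (n + α + 1) ≠ 0 :=
    (Gamma_pos_of_pos (by linarith [n.cast_nonneg (α := ℝ)])).ne'
  field_simp

theorem stmt4_general (s : ℝ) (hs : 0 < s) (k : ℕ) (hk2 : s < k)
    (α β : ℝ) (hα : -1 < α) (n : ℕ) :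
    ∀ x ∈ Set.Ioo (-1 : ℝ) 1,
      Dplus s k (fun y => (1 - y) ^ (α + s) * jacobiP (α + s) (β - s) n y) x =
        Real.Gamma ((n : ℝ) + α + s + 1) / Real.Gamma ((n : ℝ) + α + 1) *
          ((1 - x) ^ α * jacobiP α β n x) := by
  rintro x ⟨-, hx⟩
  have hαs : -1 < α + s := by linarith
  have hj0 (j : ℕ) : (0 : ℝ) ≤ j := j.cast_nonneg
  -- the expansion fails at `y = 1`, where `0 ^ (a + j) ≠ 0 ^ a * 0 ^ j` in general
  rw [Dplus_congr (fun y hy => one_sub_rpow_mul_jacobiP (α + s) (β - s) n hy) hx,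
    Dplus_sum_one_sub_rpow _ _ _ hk2 (fun j _ => by linarith [hj0 j])
      (fun j _ => by linarith [hj0 j]) hx,
    one_sub_rpow_mul_jacobiP α β n hx, Finset.mul_sum]
  refine Finset.sum_congr rfl fun j hj => ?_
  rw [show α + s + j - s = α + j by ring, ← mul_assoc,
    jacobiCoeff_mul_Gamma_div β n hα hαs (Finset.mem_range_succ_iff.mp hj)]

/-- Lemma 2.6, right derivative formula. -/
theorem stmt4 (s : ℝ) (hs : 0 < s) (k : ℕ) (hk1 : (k : ℝ) - 1 ≤ s) (hk2 : s < k)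
    (α β : ℝ) (hα : -1 < α) (n : ℕ) :
    ∀ x ∈ Set.Ioo (-1 : ℝ) 1,
      Dplus s k (fun y => (1 - y) ^ (α + s) * jacobiP (α + s) (β - s) n y) x =
        Real.Gamma ((n : ℝ) + α + s + 1) / Real.Gamma ((n : ℝ) + α + 1) *
          ((1 - x) ^ α * jacobiP α β n x) :=
  stmt4_general s hs k hk2 α β hα n
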